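/- Every maximal ideal of R = ℤ × ℤ[√2] × ℤ[√3] of odd residue characteristic admits a generator lying in W. Precisely: if m is a maximal ideal of R with (2, 2, 2) ∉ m, then there exists θ ∈ W such that m is the ideal of R generated by θ. -/

import Mathlib

abbrev Rng : Type := ℤ × Zsqrtd 2 × Zsqrtd 3

def Wset : Set Rng :=
  {p | p.1 ≡ p.2.1.re [ZMOD 2] ∧ p.1 ≡ p.2.2.re + p.2.2.im [ZMOD 2] ∧
       p.2.1.im ≡ p.2.2.im [ZMOD 2]}

private lemma modeq_iff (a b : ℤ) : a ≡ b [ZMOD 2] ↔ ((a : ZMod 2) = b) :=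
  (ZMod.intCast_eq_intCast_iff a b 2).symm

def W : Subring Rng where
  carrier := Wset
  zero_mem' := by refine ⟨?_, ?_, ?_⟩ <;> decide
  one_mem' := by refine ⟨?_, ?_, ?_⟩ <;> decide
  add_mem' := by
    rintro a b ⟨h1, h2, h3⟩ ⟨g1, g2, g3⟩
    refine ⟨h1.add g1, ?_, h3.add g3⟩
    simpa [add_add_add_comm] using h2.add g2
  neg_mem' := by
    rintro a ⟨h1, h2, h3⟩
    refine ⟨h1.neg, ?_, h3.neg⟩
    have := h2.neg
    simp only [Wset, Set.mem_setOf_eq, Prod.fst_neg, Prod.snd_neg, Zsqrtd.re_neg,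
      Zsqrtd.im_neg, Int.modEq_iff_dvd] at this ⊢
    omega
  mul_mem' := by
    rintro a b ⟨h1, h2, h3⟩ ⟨g1, g2, g3⟩
    simp only [Wset, Set.mem_setOf_eq, Prod.fst_mul, Prod.snd_mul, Zsqrtd.re_mul,
      Zsqrtd.im_mul, modeq_iff] at h1 h2 h3 g1 g2 g3 ⊢
    push_cast at h1 h2 h3 g1 g2 g3 ⊢
    have h0 : (2 : ZMod 2) = 0 := rfl
    refine ⟨?_, ?_, ?_⟩
    · rw [← h1, ← g1, h0]; ring
    · linear_combination (b.1 : ZMod 2) * h2 + ((a.2.2.re : ZMod 2) + a.2.2.im) * g2 -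
        ((a.2.2.im : ZMod 2) * b.2.2.im) * h0
    · linear_combination (b.2.1.im : ZMod 2) * h2 - (b.2.1.im : ZMod 2) * h1
        + (b.2.1.re : ZMod 2) * h3 + ((a.2.2.re : ZMod 2) + a.2.2.im) * g3
        + (a.2.2.im : ZMod 2) * g2 - (a.2.2.im : ZMod 2) * g1
        + ((a.2.2.im : ZMod 2) * b.2.2.im) * h0

lemma mem_W_iff (x : Rng) : x ∈ W ↔ x ∈ Wset := Iff.rfl

/-!
A maximal ideal of a product of rings comes from a maximal ideal of one factor, and the three
factors `ℤ`, `ℤ[√2]`, `ℤ[√3]` are principal ideal domains (`ℤ[√d]` for `1 < d < 4` is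
norm-Euclidean). Hence `m` is generated by `(π, 1, 1)`, `(1, π, 1)` or `(1, 1, π)`, where `π`
generates a maximal ideal `P` of the factor. Since `2 ∉ P`, the prime above `2` in that factor
(`2`, `√2`, `1 + √3` respectively) does not divide `π`. After multiplying `π` by the unit `1 + √2`
resp. `2 + √3` if necessary, this says that `π` has odd rational part and even `√d`-coordinate,
which puts the generator in `W`.
-/
namespace Ideal

variable {R S : Type*} [CommRing R] [CommRing S]

theorem span_singleton_prod (x : R) (y : S) :
    span {(x, y)} = (span {x}).prod (span {y}) := by
  rw [← Set.singleton_prod_singleton, span_prod (iff_of_true (by simp) (by simp))]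

theorem isMaximal_of_isMaximal_prod_top {p : Ideal R} (h : (p.prod (⊤ : Ideal S)).IsMaximal) :
    p.IsMaximal := by
  have := map_eq_top_or_isMaximal_of_surjective (RingHom.fst R S) Prod.fst_surjective h
  rw [map_fst_prod] at this
  exact this.resolve_left fun hp ↦ h.ne_top (by simp [hp])

theorem isMaximal_of_isMaximal_top_prod {q : Ideal S} (h : ((⊤ : Ideal R).prod q).IsMaximal) :
    q.IsMaximal := by
  have := map_eq_top_or_isMaximal_of_surjective (RingHom.snd R S) Prod.snd_surjective h
  rw [map_snd_prod] at this
  exact this.resolve_left fun hq ↦ h.ne_top (by simp [hq])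

theorem IsMaximal.eq_prod_top_or_eq_top_prod {I : Ideal (R × S)} (h : I.IsMaximal) :
    (∃ p : Ideal R, p.IsMaximal ∧ I = p.prod ⊤) ∨ ∃ q : Ideal S, q.IsMaximal ∧ I = prod ⊤ q := by
  rcases (ideal_prod_prime I).mp h.isPrime with ⟨p, -, rfl⟩ | ⟨q, -, rfl⟩
  · exact .inl ⟨p, isMaximal_of_isMaximal_prod_top h, rfl⟩
  · exact .inr ⟨q, isMaximal_of_isMaximal_top_prod h, rfl⟩

theorem not_dvd_of_isMaximal_span_singleton {π l a : R} (hπ : (span {π}).IsMaximal)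
    (ha : a ∉ span {π}) (hl : ¬IsUnit l) (hla : l ∣ a) : ¬l ∣ π := by
  intro hlπ
  have hle : span {π} ≤ span {l} := span_singleton_le_span_singleton.mpr hlπ
  rw [hπ.eq_of_le (by rwa [ne_eq, span_singleton_eq_top]) hle] at ha
  exact ha (mem_span_singleton.mpr hla)

end Ideal

theorem isPrincipalIdealRing_of_exists_sub_mul_lt {R : Type*} [CommRing R] (f : R → ℕ)
    (h : ∀ a b : R, b ≠ 0 → ∃ q, f (a - b * q) < f b) : IsPrincipalIdealRing R := by
  refine ⟨fun I ↦ ?_⟩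
  by_cases hI : I = ⊥
  · exact hI ▸ bot_isPrincipal
  obtain ⟨g, hg⟩ := exists_minimalFor_of_wellFoundedLT (fun x ↦ x ∈ I ∧ x ≠ 0) f
    (Submodule.exists_mem_ne_zero_of_ne_bot hI)
  refine ⟨g, le_antisymm (fun x hx ↦ ?_) (Ideal.span_singleton_le_iff_mem I |>.mpr hg.prop.1)⟩
  obtain ⟨q, hq⟩ := h x g hg.prop.2
  have hr : x - g * q = 0 := by
    by_contra hr
    exact hg.not_prop_of_lt hq ⟨I.sub_mem hx (I.mul_mem_right q hg.prop.1), hr⟩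
  exact Ideal.mem_span_singleton.mpr ⟨q, sub_eq_zero.mp hr⟩

theorem Int.exists_sq_two_mul_sub_mul_le (u : ℤ) {n : ℤ} (hn : n ≠ 0) :
    ∃ q : ℤ, (2 * (u - n * q)) ^ 2 ≤ n ^ 2 := by
  refine ⟨round ((u : ℚ) / n), ?_⟩
  have hnq : (n : ℚ) ≠ 0 := Int.cast_ne_zero.mpr hn
  have hround := abs_sub_round ((u : ℚ) / n)
  have hmul : |(u : ℚ) - n * round ((u : ℚ) / n)| ≤ |(n : ℚ)| / 2 := by
    have := mul_le_mul_of_nonneg_left hround (abs_nonneg (n : ℚ))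
    rwa [← abs_mul, mul_sub, mul_div_cancel₀ _ hnq, mul_one_div] at this
  have : ((2 * (u - n * round ((u : ℚ) / n)) : ℤ) : ℚ) ^ 2 ≤ (n : ℚ) ^ 2 := by
    push_cast
    nlinarith [sq_abs ((u : ℚ) - n * round ((u : ℚ) / n)), sq_abs (n : ℚ),
      abs_nonneg ((u : ℚ) - n * round ((u : ℚ) / n))]
  exact_mod_cast this

theorem Int.exists_odd_generator_of_isMaximal {p : Ideal ℤ} (hp : p.IsMaximal)
    (h2 : (2 : ℤ) ∉ p) : ∃ g : ℤ, Odd g ∧ p = Ideal.span {g} := by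
  obtain ⟨g, rfl⟩ : ∃ g, p = Ideal.span {g} := ⟨_, (Ideal.span_singleton_generator p).symm⟩
  refine ⟨g, Int.not_even_iff_odd.mp ?_, rfl⟩
  rw [even_iff_two_dvd]
  exact Ideal.not_dvd_of_isMaximal_span_singleton hp h2 (by simp [Int.isUnit_iff]) dvd_rfl

namespace Zsqrtd

variable {d : ℤ}

theorem ne_mul_self_of_one_lt_of_lt_four (h1 : 1 < d) (h4 : d < 4) (n : ℤ) : d ≠ n * n := by
  rintro rfl
  rcases le_or_gt |n| 1 with hn | hn
  · nlinarith [abs_mul_abs_self n, abs_nonneg n]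
  · nlinarith [abs_mul_abs_self n]

/-- Rounding the coordinates of `a * star b / norm b` to `q` gives
`4 |norm (a - b q)| ≤ max 1 d · |norm b|`. -/
theorem exists_natAbs_norm_sub_mul_lt (h1 : 1 < d) (h4 : d < 4) (a : ℤ√d) {b : ℤ√d}
    (hb : b ≠ 0) : ∃ q : ℤ√d, (a - b * q).norm.natAbs < b.norm.natAbs := by
  have hn : b.norm ≠ 0 := fun h ↦
    hb ((norm_eq_zero (ne_mul_self_of_one_lt_of_lt_four h1 h4) b).mp h)
  obtain ⟨q₁, hq₁⟩ := Int.exists_sq_two_mul_sub_mul_le (a * star b).re hn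
  obtain ⟨q₂, hq₂⟩ := Int.exists_sq_two_mul_sub_mul_le (a * star b).im hn
  refine ⟨⟨q₁, q₂⟩, Int.natAbs_lt_iff_sq_lt.mpr ?_⟩
  set x := (a * star b).re - b.norm * q₁
  set y := (a * star b).im - b.norm * q₂
  have key : 4 * (a - b * ⟨q₁, q₂⟩).norm * b.norm = (2 * x) ^ 2 - d * (2 * y) ^ 2 := by
    simp only [x, y, norm_def, re_sub, im_sub, re_mul, im_mul, re_star, im_star]
    ring
  set r := (a - b * ⟨q₁, q₂⟩).norm
  have hpos : 0 < b.norm ^ 2 := by positivity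
  have hlo : -(3 * b.norm ^ 2) ≤ 4 * r * b.norm := by nlinarith [sq_nonneg (2 * x)]
  have hhi : 4 * r * b.norm ≤ b.norm ^ 2 := by nlinarith [sq_nonneg (2 * y)]
  have hsq : 16 * r ^ 2 * b.norm ^ 2 ≤ 9 * b.norm ^ 2 * b.norm ^ 2 := by nlinarith
  nlinarith [le_of_mul_le_mul_right hsq hpos]

theorem isPrincipalIdealRing_of_one_lt_of_lt_four (h1 : 1 < d) (h4 : d < 4) :
    IsPrincipalIdealRing (ℤ√d) :=
  isPrincipalIdealRing_of_exists_sub_mul_lt (fun x ↦ x.norm.natAbs) fun a _ hb ↦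
    exists_natAbs_norm_sub_mul_lt h1 h4 a hb

theorem sqrtd_dvd_iff (x : ℤ√d) : sqrtd ∣ x ↔ d ∣ x.re := by
  constructor
  · rintro ⟨y, rfl⟩
    exact ⟨y.im, by simp [mul_comm]⟩
  · rintro ⟨k, hk⟩
    exact ⟨⟨x.im, k⟩, by ext <;> simp [hk, mul_comm]⟩

theorem one_add_sqrtd_dvd_iff (x : ℤ√d) : (⟨1, 1⟩ : ℤ√d) ∣ x ↔ d - 1 ∣ x.re - x.im := by
  constructor
  · rintro ⟨y, rfl⟩
    exact ⟨y.im, by simp only [re_mul, im_mul]; ring⟩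
  · rintro ⟨k, hk⟩
    exact ⟨⟨x.im - k, k⟩, by ext <;> simp only [re_mul, im_mul] <;> linarith⟩

theorem exists_odd_re_even_im_generator_of_isMaximal_two {P : Ideal (ℤ√2)} (hP : P.IsMaximal)
    (h2 : (2 : ℤ√2) ∉ P) : ∃ π : ℤ√2, Odd π.re ∧ Even π.im ∧ P = Ideal.span {π} := by
  have := isPrincipalIdealRing_of_one_lt_of_lt_four (d := 2) (by norm_num) (by norm_num)
  obtain ⟨π, rfl⟩ : ∃ π, P = Ideal.span {π} := ⟨_, (Ideal.span_singleton_generator P).symm⟩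
  have hre : ¬2 ∣ π.re := by
    rw [← sqrtd_dvd_iff]
    refine Ideal.not_dvd_of_isMaximal_span_singleton hP h2 ?_ ⟨sqrtd, dmuld.symm⟩
    rw [← norm_eq_one_iff]
    simp [norm_def]
  rw [Int.two_dvd_ne_zero] at hre
  rcases Int.even_or_odd π.im with him | him
  · exact ⟨π, Int.odd_iff.mpr hre, him, rfl⟩
  · have hu : IsUnit (⟨1, 1⟩ : ℤ√2) := norm_eq_one_iff.mp (by simp [norm_def])
    refine ⟨(⟨1, 1⟩ : ℤ√2) * π, ?_, ?_, (Ideal.span_singleton_mul_left_unit hu π).symm⟩ <;>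
      simp only [Int.odd_iff, Int.even_iff, re_mul, im_mul] at him ⊢ <;> omega

theorem exists_odd_re_even_im_generator_of_isMaximal_three {P : Ideal (ℤ√3)} (hP : P.IsMaximal)
    (h2 : (2 : ℤ√3) ∉ P) : ∃ π : ℤ√3, Odd π.re ∧ Even π.im ∧ P = Ideal.span {π} := by
  have := isPrincipalIdealRing_of_one_lt_of_lt_four (d := 3) (by norm_num) (by norm_num)
  obtain ⟨π, rfl⟩ : ∃ π, P = Ideal.span {π} := ⟨_, (Ideal.span_singleton_generator P).symm⟩
  have hre : ¬2 ∣ π.re - π.im := by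
    have := one_add_sqrtd_dvd_iff π
    norm_num at this
    rw [← this]
    refine Ideal.not_dvd_of_isMaximal_span_singleton hP h2 ?_ ⟨⟨-1, 1⟩, by decide⟩
    rw [← norm_eq_one_iff]
    simp [norm_def]
  rw [Int.two_dvd_ne_zero] at hre
  rcases Int.even_or_odd π.im with him | him
  · exact ⟨π, Int.odd_iff.mpr (by rw [Int.even_iff] at him; omega), him, rfl⟩
  · have hu : IsUnit (⟨2, 1⟩ : ℤ√3) := norm_eq_one_iff.mp (by simp [norm_def])
    refine ⟨(⟨2, 1⟩ : ℤ√3) * π, ?_, ?_, (Ideal.span_singleton_mul_left_unit hu π).symm⟩ <;>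
      simp only [Int.odd_iff, Int.even_iff, re_mul, im_mul] at him ⊢ <;> omega

end Zsqrtd

/-- Every maximal ideal of `R = ℤ × ℤ[√2] × ℤ[√3]` of odd residue characteristic admits a
generator lying in `W`: if `m` is a maximal ideal of `R` with `(2,2,2) ∉ m`, then there is
`θ ∈ W` with `m = θ·R`. -/
theorem stmt5 (m : Ideal Rng) (hm : m.IsMaximal)
    (h2 : (((2 : ℤ), (2 : Zsqrtd 2), (2 : Zsqrtd 3)) : Rng) ∉ m) :
    ∃ θ : Rng, θ ∈ W ∧ m = Ideal.span {θ} := by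
  rcases hm.eq_prod_top_or_eq_top_prod with ⟨p, hp, rfl⟩ | ⟨q, hq, rfl⟩
  · obtain ⟨g, ⟨k, rfl⟩, rfl⟩ := Int.exists_odd_generator_of_isMaximal hp fun h ↦ h2 ⟨h, trivial⟩
    refine ⟨(2 * k + 1, 1, 1), ?_, by simp [Ideal.span_singleton_prod]⟩
    simp [mem_W_iff, Wset, Int.ModEq]
  rcases hq.eq_prod_top_or_eq_top_prod with ⟨P, hP, rfl⟩ | ⟨P, hP, rfl⟩
  · obtain ⟨π, ⟨a, ha⟩, ⟨b, hb⟩, rfl⟩ :=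
      Zsqrtd.exists_odd_re_even_im_generator_of_isMaximal_two hP fun h ↦ h2 ⟨trivial, h, trivial⟩
    refine ⟨(1, π, 1), ?_, by simp [Ideal.span_singleton_prod]⟩
    simp [mem_W_iff, Wset, Int.ModEq]
    omega
  · obtain ⟨π, ⟨a, ha⟩, ⟨b, hb⟩, rfl⟩ :=
      Zsqrtd.exists_odd_re_even_im_generator_of_isMaximal_three hP fun h ↦ h2 ⟨trivial, trivial, h⟩
    refine ⟨(1, 1, π), ?_, by simp [Ideal.span_singleton_prod]⟩
    simp [mem_W_iff, Wset, Int.ModEq]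
    omega
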